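/- arXiv:2503.17546 — 4 statements merged into one kernel-verified Lean document; each statement's English description precedes it below -/
import Mathlib

section
/- Let ω ∈ ℝ, T ≥ 0, and a : Fin N → ℝ. Define complex-valued paths γ_k(t) = exp(𝒾(ω·t + a_k)) on [0,T]. Then for every M ≥ 1 and every multi-index I = (i_1,…,i_M), the level-M path signature equals S_I(γ) = exp(𝒾·(a_{i_1} + ⋯ + a_{i_M})) / M! · (exp(𝒾ωT) − 1)^M. -/
/-!
Every component of the steady-state path has derivative `e^{𝒾 a_k} g(t)` with the same
`g(t) = 𝒾ω e^{𝒾ωt}`, so the signature integrand is `∏ e^{𝒾 a_{i_k}}` times the symmetric function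
`∏ g(t_k)`. The `M!` images of the ordered simplex under coordinate permutations tile the cube
`[0,T]^M` up to the null diagonals, hence the simplex integral of `∏ g(t_k)` is
`(∫_0^T g)^M / M!`, and `∫_0^T g = e^{𝒾ωT} - 1`.
-/

open MeasureTheory Complex

/-- The path signature `S_I(γ)` of a complex-valued path `γ = (γ_1, …, γ_N) : [0,T] → ℂ^N`
with respect to the multi-index `I = (i_1, …, i_M)`: the `M`-fold iterated integral
`∫_{0 ≤ t_1 ≤ ⋯ ≤ t_M ≤ T} γ̇_{i_1}(t_1) ⋯ γ̇_{i_M}(t_M) dt_1 ⋯ dt_M`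
over the ordered simplex. -/
noncomputable def pathSigC {N M : ℕ} (γ : Fin N → ℝ → ℂ) (T : ℝ) (I : Fin M → Fin N) : ℂ :=
  ∫ t in {t : Fin M → ℝ | Monotone t ∧ ∀ k, t k ∈ Set.Icc 0 T},
    ∏ k, deriv (γ (I k)) (t k)

def orderedSimplex (s : Set ℝ) (M : ℕ) : Set (Fin M → ℝ) :=
  {t | Monotone t ∧ ∀ k, t k ∈ s}

theorem measurableSet_orderedSimplex {s : Set ℝ} (hs : MeasurableSet s) (M : ℕ) :
    MeasurableSet (orderedSimplex s M) := by
  have hcube : MeasurableSet {t : Fin M → ℝ | ∀ k, t k ∈ s} := by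
    simpa only [Set.pi, Set.mem_univ, true_imp_iff] using MeasurableSet.univ_pi fun _ : Fin M => hs
  exact isClosed_monotone.measurableSet.inter hcube

theorem iUnion_preimage_comp_perm_orderedSimplex (s : Set ℝ) (M : ℕ) :
    ⋃ σ : Equiv.Perm (Fin M), (· ∘ σ) ⁻¹' orderedSimplex s M = Set.univ.pi fun _ => s := by
  ext t
  simp only [Set.mem_iUnion, Set.mem_preimage, orderedSimplex, Set.mem_ofPred_eq,
    Function.comp_apply, Set.mem_univ_pi]
  refine ⟨fun ⟨σ, _, hσ⟩ k => by simpa using hσ (σ.symm k), fun ht => ?_⟩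
  exact ⟨Tuple.sort t, Tuple.monotone_sort t, fun k => ht _⟩

theorem volume_setOf_apply_eq_apply_eq_zero {ι : Type*} [Fintype ι] {i j : ι} (hij : i ≠ j) :
    volume {t : ι → ℝ | t i = t j} = 0 := by
  classical
  let L : (ι → ℝ) →ₗ[ℝ] ℝ := LinearMap.proj (R := ℝ) (φ := fun _ => ℝ) i - LinearMap.proj j
  have hL : {t : ι → ℝ | t i = t j} = (LinearMap.ker L : Set (ι → ℝ)) := by
    ext t; simp [L, sub_eq_zero]
  rw [hL]
  refine Measure.addHaar_submodule _ _ fun htop => ?_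
  have hmem : Pi.single i (1 : ℝ) ∈ LinearMap.ker L := htop ▸ Submodule.mem_top
  simp [L, hij.symm] at hmem

theorem pairwise_aedisjoint_preimage_comp_perm_orderedSimplex (s : Set ℝ) (M : ℕ) :
    Pairwise (Function.onFun (AEDisjoint volume)
      fun σ : Equiv.Perm (Fin M) => (· ∘ σ) ⁻¹' orderedSimplex s M) := by
  intro σ τ hστ
  -- a tuple sorted by two different permutations must repeat a coordinate
  have hsub : (· ∘ σ) ⁻¹' orderedSimplex s M ∩ (· ∘ τ) ⁻¹' orderedSimplex s M ⊆
      ⋃ (i : Fin M) (j : Fin M) (_ : i ≠ j), {t | t i = t j} := by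
    rintro t ⟨hσ, hτ⟩
    by_contra hdiag
    simp only [Set.mem_iUnion, Set.mem_ofPred_eq, not_exists] at hdiag
    have ht : Function.Injective t := fun i j hij => by_contra fun hne => hdiag i j hne hij
    exact hστ (Equiv.ext fun k => ht (congrFun (Tuple.unique_monotone hσ.1 hτ.1) k))
  exact measure_mono_null hsub <| measure_iUnion_null fun i => measure_iUnion_null fun j =>
    measure_iUnion_null fun hij => volume_setOf_apply_eq_apply_eq_zero hij

section PiVolume

variable {ι α E : Type*} [Fintype ι] [MeasureSpace α] [SigmaFinite (volume : Measure α)]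

theorem setIntegral_preimage_comp_perm [NormedAddCommGroup E] [NormedSpace ℝ E]
    (σ : Equiv.Perm ι) {F : (ι → α) → E} (hF : ∀ t, F (t ∘ σ) = F t) (A : Set (ι → α)) :
    ∫ t in (· ∘ σ) ⁻¹' A, F t = ∫ t in A, F t := by
  let e := MeasurableEquiv.piCongrLeft (fun _ : ι => α) σ⁻¹
  have he : ⇑e = (· ∘ σ) := by
    funext t k
    simpa [e, MeasurableEquiv.coe_piCongrLeft] using
      Equiv.piCongrLeft_apply_apply (fun _ : ι => α) σ⁻¹ t (σ k)
  have h := (volume_measurePreserving_piCongrLeft (fun _ : ι => α) σ⁻¹).setIntegral_preimage_emb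
    e.measurableEmbedding F A
  rw [he] at h
  simpa only [hF] using h

theorem setIntegral_univ_pi_prod_eq_pow {𝕜 : Type*} [RCLike 𝕜] (g : α → 𝕜) (s : Set α) :
    ∫ t in Set.univ.pi (fun _ : ι => s), ∏ k, g (t k) = (∫ x in s, g x) ^ Fintype.card ι := by
  rw [volume_pi, Measure.restrict_pi_pi, integral_fintype_prod_eq_pow]

end PiVolume

theorem factorial_mul_setIntegral_orderedSimplex {𝕜 : Type*} [RCLike 𝕜] {s : Set ℝ}
    (hs : MeasurableSet s) {g : ℝ → 𝕜} (hg : IntegrableOn g s) (M : ℕ) :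
    (M.factorial : 𝕜) * ∫ t in orderedSimplex s M, ∏ k, g (t k) = (∫ x in s, g x) ^ M := by
  have hint : IntegrableOn (fun t : Fin M → ℝ => ∏ k, g (t k))
      (⋃ σ : Equiv.Perm (Fin M), (· ∘ σ) ⁻¹' orderedSimplex s M) := by
    rw [iUnion_preimage_comp_perm_orderedSimplex, IntegrableOn, volume_pi, Measure.restrict_pi_pi]
    exact Integrable.fintype_prod fun _ => hg
  calc (M.factorial : 𝕜) * ∫ t in orderedSimplex s M, ∏ k, g (t k)
      = ∑ σ : Equiv.Perm (Fin M), ∫ t in (· ∘ σ) ⁻¹' orderedSimplex s M, ∏ k, g (t k) := by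
        rw [Finset.sum_congr rfl fun σ _ => setIntegral_preimage_comp_perm σ
            (fun t => Equiv.prod_comp σ fun k => g (t k)) _, Finset.sum_const, Finset.card_univ,
          Fintype.card_perm, Fintype.card_fin, nsmul_eq_mul]
    _ = ∫ t in Set.univ.pi (fun _ => s), ∏ k, g (t k) := by
        rw [← iUnion_preimage_comp_perm_orderedSimplex, integral_iUnion_ae
          (fun σ => ((measurableSet_orderedSimplex hs M).preimage
            (measurable_pi_lambda _ fun k => measurable_pi_apply (σ k))).nullMeasurableSet)
          (pairwise_aedisjoint_preimage_comp_perm_orderedSimplex s M) hint, tsum_fintype]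
    _ = (∫ x in s, g x) ^ M := by rw [setIntegral_univ_pi_prod_eq_pow, Fintype.card_fin]

theorem pathSigC_eq_of_deriv_eq_mul {N M : ℕ} {γ : Fin N → ℝ → ℂ} {c : Fin N → ℂ} {g : ℝ → ℂ}
    (hγ : ∀ n t, deriv (γ n) t = c n * g t) {T : ℝ} (hg : IntegrableOn g (Set.Icc 0 T))
    (I : Fin M → Fin N) :
    pathSigC γ T I = (∏ k, c (I k)) / M.factorial * (∫ x in Set.Icc 0 T, g x) ^ M := by
  rw [← factorial_mul_setIntegral_orderedSimplex measurableSet_Icc hg M, pathSigC]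
  simp only [hγ, Finset.prod_mul_distrib, integral_const_mul]
  have hM : (M.factorial : ℂ) ≠ 0 := by exact_mod_cast M.factorial_ne_zero
  rw [div_mul_eq_mul_div, mul_div_assoc, mul_div_cancel_left₀ _ hM]
  rfl

theorem deriv_cexp_I_mul_add (ω : ℝ) (c : ℂ) (t : ℝ) :
    deriv (fun t : ℝ => exp (I * (ω * t + c))) t = exp (I * c) * (I * ω * exp (I * ω * t)) := by
  have h : HasDerivAt (fun t : ℝ => I * (ω * t + c)) (I * ω) t := by
    simpa using ((ofRealCLM.hasDerivAt (x := t)).const_mul (ω : ℂ)).add_const c |>.const_mul I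
  rw [h.cexp.deriv, mul_add, exp_add, ← mul_assoc I]
  ring

theorem integral_Icc_I_mul_cexp (ω : ℝ) {T : ℝ} (hT : 0 ≤ T) :
    ∫ x in Set.Icc 0 T, I * ω * exp (I * ω * x) = exp (I * ω * T) - 1 := by
  have h : ∀ x : ℝ, HasDerivAt (fun t : ℝ => exp (I * ω * t)) (I * ω * exp (I * ω * x)) x := by
    intro x
    simpa [mul_comm] using ((ofRealCLM.hasDerivAt (x := x)).const_mul (I * ω)).cexp
  rw [integral_Icc_eq_integral_Ioc, ← intervalIntegral.integral_of_le hT,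
    intervalIntegral.integral_eq_sub_of_hasDerivAt (fun x _ => h x)
      ((by fun_prop : Continuous fun x : ℝ => I * ω * exp (I * ω * x)).intervalIntegrable 0 T)]
  simp

theorem steadyState_pathSig_exp_general (N : ℕ) (ω T : ℝ) (hT : 0 ≤ T) (a : Fin N → ℝ)
    (M : ℕ) (I : Fin M → Fin N) :
    pathSigC (fun k t => Complex.exp (Complex.I * ((ω : ℂ) * (t : ℂ) + (a k : ℂ)))) T I
      = Complex.exp (Complex.I * ∑ k, (a (I k) : ℂ)) / (Nat.factorial M)
          * (Complex.exp (Complex.I * (ω : ℂ) * (T : ℂ)) - 1) ^ M := by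
  have hg : Continuous fun x : ℝ => Complex.I * ω * exp (Complex.I * ω * x) := by fun_prop
  rw [pathSigC_eq_of_deriv_eq_mul (fun k => deriv_cexp_I_mul_add ω (a k)) hg.integrableOn_Icc,
    integral_Icc_I_mul_cexp ω hT, ← exp_sum, Finset.mul_sum]

/-- For the circle-valued steady-state paths `γ_k(t) = exp(𝒾(ω t + a_k))` on `[0,T]`, every
level-`M` signature (`M ≥ 1`) equals `exp(𝒾 (a_{i_1} + ⋯ + a_{i_M})) / M! · (e^{𝒾ωT} − 1)^M`. -/
theorem steadyState_pathSig_exp (N : ℕ) (ω T : ℝ) (hT : 0 ≤ T) (a : Fin N → ℝ)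
    (M : ℕ) (hM : 1 ≤ M) (I : Fin M → Fin N) :
    pathSigC (fun k t => Complex.exp (Complex.I * ((ω : ℂ) * (t : ℂ) + (a k : ℂ)))) T I
      = Complex.exp (Complex.I * ∑ k, (a (I k) : ℂ)) / (Nat.factorial M)
          * (Complex.exp (Complex.I * (ω : ℂ) * (T : ℂ)) - 1) ^ M :=
  steadyState_pathSig_exp_general N ω T hT a M I
end

section
/- Let ω ∈ ℝ, T ≥ 0, a : Fin N → ℝ, and define γ_k(t) = exp(𝒾(ω·t + a_k)) on [0,T]. Then for every multi-index I = (i_1,…,i_M) and every permutation σ of {1,…,M}, the path signatures satisfy S_{(i_{σ(1)},…,i_{σ(M)})}(γ) = S_{(i_1,…,i_M)}(γ); in particular, the lead matrix vanishes: L_{jk}(γ) = (1/2)(S_{(j,k)}(γ) − S_{(k,j)}(γ)) = 0 for all j, k. -/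
open MeasureTheory Complex

lemma deriv_exp_aff (ω c : ℝ) (t : ℝ) :
    deriv (fun t : ℝ => Complex.exp (Complex.I * ((ω : ℂ) * (t : ℂ) + (c : ℂ)))) t
      = Complex.I * ω * Complex.exp (Complex.I * ((ω : ℂ) * (t : ℂ) + (c : ℂ))) := by
  have h1 : HasDerivAt (fun t : ℝ => (t : ℂ)) 1 t := (hasDerivAt_id t).ofReal_comp
  have h : HasDerivAt (fun t : ℝ => Complex.I * ((ω : ℂ) * (t : ℂ) + (c : ℂ)))
      (Complex.I * ω) t := by
    simpa using (((h1.const_mul (ω : ℂ)).add_const (c : ℂ)).const_mul Complex.I)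
  simpa [mul_comm] using h.cexp.deriv

/-- For the circle-valued steady-state paths `γ_k(t) = exp(𝒾(ω t + a_k))` on `[0,T]`, the path
signature is invariant under permutations of the multi-index; in particular the lead matrix
`L_{jk} = (1/2)(S_{(j,k)} − S_{(k,j)})` vanishes. -/
theorem steadyState_pathSig_exp_perm_invariant (N : ℕ) (ω T : ℝ) (hT : 0 ≤ T)
    (a : Fin N → ℝ) :
    (∀ (M : ℕ) (I : Fin M → Fin N) (σ : Equiv.Perm (Fin M)),
      pathSigC (fun k t => Complex.exp (Complex.I * ((ω : ℂ) * (t : ℂ) + (a k : ℂ)))) T (I ∘ σ)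
        = pathSigC (fun k t => Complex.exp (Complex.I * ((ω : ℂ) * (t : ℂ) + (a k : ℂ)))) T I) ∧
    (∀ j k : Fin N,
      (1 / 2 : ℂ) *
        (pathSigC (fun k t => Complex.exp (Complex.I * ((ω : ℂ) * (t : ℂ) + (a k : ℂ)))) T ![j, k]
          - pathSigC (fun k t => Complex.exp (Complex.I * ((ω : ℂ) * (t : ℂ) + (a k : ℂ)))) T
              ![k, j]) = 0) := by
  have key : ∀ (M : ℕ) (I : Fin M → Fin N) (σ : Equiv.Perm (Fin M)),
      pathSigC (fun k t => Complex.exp (Complex.I * ((ω : ℂ) * (t : ℂ) + (a k : ℂ)))) T (I ∘ σ)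
        = pathSigC (fun k t => Complex.exp (Complex.I * ((ω : ℂ) * (t : ℂ) + (a k : ℂ)))) T I := by
    intro M I σ
    unfold pathSigC
    congr 1
    funext t
    have hprod : ∀ (J : Fin M → Fin N),
        (∏ k, deriv (fun s : ℝ =>
            Complex.exp (Complex.I * ((ω : ℂ) * (s : ℂ) + (a (J k) : ℂ)))) (t k))
          = (∏ k, (Complex.I * ω * Complex.exp (Complex.I * (a (J k) : ℂ)))) *
            ∏ k, Complex.exp (Complex.I * ((ω : ℂ) * (t k : ℂ))) := by
      intro J
      rw [← Finset.prod_mul_distrib]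
      refine Finset.prod_congr rfl fun k _ => ?_
      rw [deriv_exp_aff, mul_add, Complex.exp_add]
      ring
    simp only [Function.comp]
    rw [hprod, hprod]
    congr 1
    exact Equiv.prod_comp σ (fun k => Complex.I * ω * Complex.exp (Complex.I * (a (I k) : ℂ)))
  refine ⟨key, fun j k => ?_⟩
  have hswap : (![j, k] : Fin 2 → Fin N) ∘ (Equiv.swap 0 1 : Equiv.Perm (Fin 2)) = ![k, j] := by
    funext i
    fin_cases i <;> simp
  have := key 2 ![j, k] (Equiv.swap 0 1)
  rw [hswap] at this
  rw [this, sub_self, mul_zero]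
end

section
/- Let ω ∈ ℝ, T ≥ 0, and a, b ∈ ℝ. Define γ_1(t) = sin(ω·t + a) and γ_2(t) = sin(ω·t + b) on [0,T]. Let S_{(1,2)} = ∫_0^T ∫_0^{t_2} γ̇_1(t_1) γ̇_2(t_2) dt_1 dt_2 and S_{(2,1)} = ∫_0^T ∫_0^{t_2} γ̇_2(t_1) γ̇_1(t_2) dt_1 dt_2 be the level-two iterated integrals, and let L_{12} = (1/2)(S_{(1,2)} − S_{(2,1)}) be the lead-matrix entry. Then L_{12} = (sin(a − b)/2) · (ωT − sin(ωT)). -/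
/-!
The inner integral of the iterated integral is a fundamental-theorem-of-calculus evaluation,
so `S_{(1,2)} - S_{(2,1)}` is the integral of the Wronskian `γ₁ γ̇₂ - γ₂ γ̇₁` plus boundary terms.
For two sinusoids of the same frequency the Wronskian is the constant `ω sin (a - b)`, which gives
the secular term `ω T sin (a - b)`; the boundary terms add up to `- sin (ω T) sin (a - b)`.
-/

open intervalIntegral Real

/-- The level-two signature term `S_{(x,y)}` of the path `(x, y)` on `[0, T]`. -/
noncomputable def signatureTwo (x y : ℝ → ℝ) (T : ℝ) : ℝ :=
  ∫ t₂ in (0 : ℝ)..T, ∫ t₁ in (0 : ℝ)..t₂, deriv x t₁ * deriv y t₂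

section SignatureTwo

variable {x y : ℝ → ℝ}

theorem signatureTwo_eq_integral (hx : Differentiable ℝ x) (hx' : Continuous (deriv x)) (T : ℝ) :
    signatureTwo x y T = ∫ t in (0 : ℝ)..T, (x t - x 0) * deriv y t := by
  unfold signatureTwo
  congr 1 with t
  rw [integral_mul_const, integral_deriv_eq_sub (fun s _ => hx s) (hx'.intervalIntegrable _ _)]

theorem signatureTwo_sub_signatureTwo (hx : Differentiable ℝ x) (hx' : Continuous (deriv x))
    (hy : Differentiable ℝ y) (hy' : Continuous (deriv y)) (T : ℝ) :
    signatureTwo x y T - signatureTwo y x T =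
      (∫ t in (0 : ℝ)..T, (x t * deriv y t - y t * deriv x t))
        - x 0 * (y T - y 0) + y 0 * (x T - x 0) := by
  have hxy : IntervalIntegrable (fun t => x t * deriv y t) MeasureTheory.volume 0 T :=
    (hx.continuous.mul hy').intervalIntegrable _ _
  have hyx : IntervalIntegrable (fun t => y t * deriv x t) MeasureTheory.volume 0 T :=
    (hy.continuous.mul hx').intervalIntegrable _ _
  have hFTC : ∀ {z : ℝ → ℝ}, Differentiable ℝ z → Continuous (deriv z) →
      ∫ t in (0 : ℝ)..T, deriv z t = z T - z 0 :=
    fun hz hz' => integral_deriv_eq_sub (fun s _ => hz s) (hz'.intervalIntegrable _ _)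
  simp only [signatureTwo_eq_integral hx hx', signatureTwo_eq_integral hy hy', sub_mul]
  rw [integral_sub hxy ((hy'.const_mul _).intervalIntegrable _ _), integral_const_mul,
    integral_sub hyx ((hx'.const_mul _).intervalIntegrable _ _), integral_const_mul,
    integral_sub hxy hyx, hFTC hx hx', hFTC hy hy']
  ring

end SignatureTwo

theorem hasDerivAt_sin_mul_add (ω c t : ℝ) :
    HasDerivAt (fun t => sin (ω * t + c)) (ω * cos (ω * t + c)) t := by
  simpa [mul_comm] using ((hasDerivAt_id t).const_mul ω |>.add_const c).sin

theorem deriv_sin_mul_add (ω c : ℝ) :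
    deriv (fun t => sin (ω * t + c)) = fun t => ω * cos (ω * t + c) :=
  funext fun t => (hasDerivAt_sin_mul_add ω c t).deriv

theorem sin_mul_add_wronskian (ω a b t : ℝ) :
    sin (ω * t + a) * (ω * cos (ω * t + b)) - sin (ω * t + b) * (ω * cos (ω * t + a)) =
      ω * sin (a - b) := by
  have h := sin_sub (ω * t + a) (ω * t + b)
  rw [add_sub_add_left_eq_sub] at h
  rw [h]
  ring

theorem lead_sin_steadyState_general (ω T a b : ℝ) :
    (1 / 2 : ℝ) *
      ((∫ t2 in (0 : ℝ)..T, ∫ t1 in (0 : ℝ)..t2,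
          deriv (fun t => Real.sin (ω * t + a)) t1 * deriv (fun t => Real.sin (ω * t + b)) t2)
        - ∫ t2 in (0 : ℝ)..T, ∫ t1 in (0 : ℝ)..t2,
            deriv (fun t => Real.sin (ω * t + b)) t1 * deriv (fun t => Real.sin (ω * t + a)) t2)
      = (Real.sin (a - b) / 2) * (ω * T - Real.sin (ω * T)) := by
  have hdiff : ∀ c, Differentiable ℝ fun t => sin (ω * t + c) :=
    fun c t => (hasDerivAt_sin_mul_add ω c t).differentiableAt
  have hcont : ∀ c, Continuous (deriv fun t => sin (ω * t + c)) := by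
    intro c
    rw [deriv_sin_mul_add]
    fun_prop
  change (1 / 2 : ℝ) * (signatureTwo _ _ T - signatureTwo _ _ T) = _
  rw [signatureTwo_sub_signatureTwo (hdiff a) (hcont a) (hdiff b) (hcont b)]
  simp only [deriv_sin_mul_add, sin_mul_add_wronskian, integral_const, smul_eq_mul, mul_zero,
    zero_add, sub_zero]
  rw [sin_add (ω * T) a, sin_add (ω * T) b, sin_sub a b]
  ring

/-- Steady-state lead matrix of the sinusoid: for the paths `γ₁(t) = sin(ωt + a)` and
`γ₂(t) = sin(ωt + b)` on `[0,T]`, the lead-matrix entry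
`L₁₂ = (1/2)(S_{(1,2)} − S_{(2,1)})`, where
`S_{(i,j)} = ∫_0^T ∫_0^{t₂} γ̇_i(t₁) γ̇_j(t₂) dt₁ dt₂`, equals
`(sin(a − b)/2) (ωT − sin(ωT))`. -/
theorem lead_sin_steadyState (ω T a b : ℝ) (hT : 0 ≤ T) :
    (1 / 2 : ℝ) *
      ((∫ t2 in (0 : ℝ)..T, ∫ t1 in (0 : ℝ)..t2,
          deriv (fun t => Real.sin (ω * t + a)) t1 * deriv (fun t => Real.sin (ω * t + b)) t2)
        - ∫ t2 in (0 : ℝ)..T, ∫ t1 in (0 : ℝ)..t2,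
            deriv (fun t => Real.sin (ω * t + b)) t1 * deriv (fun t => Real.sin (ω * t + a)) t2)
      = (Real.sin (a - b) / 2) * (ω * T - Real.sin (ω * T)) :=
  lead_sin_steadyState_general ω T a b
end

section
/- For every x ∈ ℝ, the wrapped Gaussian density converges pointwise to the uniform density on the circle as the variance tends to infinity: lim_{V → ∞} (1/√(2πV)) · ∑_{k ∈ ℤ} exp( −(x + 2πk)² / (2V) ) = 1/(2π). -/
/-!
The wrapped Gaussian sum is a Jacobi theta function. In Mathlib's normalization
`evenKernel a t = ∑ₙ exp (-π (n + a)² t)` and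
`cosKernel a t = ∑ₙ exp (2πina) exp (-π n² t)`, it equals `evenKernel (x / 2π) (2π / V)`,
and the theta transformation formula (Poisson summation) turns this into
`√(V / 2π) · cosKernel (x / 2π) (V / 2π)`. As `V → ∞` every nonconstant Fourier mode of
`cosKernel` decays exponentially, so `cosKernel → 1`, while the prefactor `√(V / 2π) / √(2πV)`
is exactly `1 / 2π`.
-/

open Real Filter Topology Asymptotics HurwitzZeta

theorem tsum_exp_neg_add_two_pi_mul_sq_div {V : ℝ} (hV : 0 < V) (x : ℝ) :
    ∑' k : ℤ, rexp (-(x + 2 * π * k) ^ 2 / (2 * V)) =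
      √(V / (2 * π)) * cosKernel ↑(x / (2 * π)) (V / (2 * π)) := by
  have hterm (k : ℤ) :
      -(x + 2 * π * k) ^ 2 / (2 * V) = -π * (k + x / (2 * π)) ^ 2 * (2 * π / V) := by
    field_simp
    ring
  rw [tsum_congr fun k ↦ congrArg rexp (hterm k),
    (hasSum_int_evenKernel _ (by positivity)).tsum_eq, evenKernel_functional_equation,
    ← sqrt_eq_rpow, one_div_div, one_div, ← sqrt_inv, inv_div]

theorem tendsto_cosKernel_atTop (a : UnitAddCircle) : Tendsto (cosKernel a) atTop (𝓝 1) := by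
  obtain ⟨p, hp, hO⟩ := isBigO_atTop_cosKernel_sub a
  have hexp : Tendsto (fun x ↦ rexp (-p * x)) atTop (𝓝 0) :=
    tendsto_exp_atBot.comp (tendsto_id.const_mul_atTop_of_neg (neg_neg_of_pos hp))
  simpa using (hO.trans_tendsto hexp).add_const 1

/-- The wrapped Gaussian density on the circle converges pointwise to the uniform density
`1/(2π)` as the variance tends to infinity. -/
theorem wrapped_gaussian_tendsto_uniform (x : ℝ) :
    Tendsto
      (fun V : ℝ =>
        (1 / Real.sqrt (2 * Real.pi * V)) *
          ∑' k : ℤ, Real.exp (-(x + 2 * Real.pi * (k : ℝ)) ^ 2 / (2 * V)))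
      atTop (nhds (1 / (2 * Real.pi))) := by
  have hcos : Tendsto (fun V ↦ 1 / (2 * π) * cosKernel ↑(x / (2 * π)) (V / (2 * π))) atTop
      (𝓝 (1 / (2 * π))) := by
    simpa using ((tendsto_cosKernel_atTop _).comp
      (tendsto_id.atTop_div_const (by positivity))).const_mul (1 / (2 * π))
  refine hcos.congr' ?_
  filter_upwards [eventually_gt_atTop 0] with V hV
  rw [tsum_exp_neg_add_two_pi_mul_sq_div hV, ← mul_assoc]
  congr 1
  rw [sqrt_div' _ (by positivity), sqrt_mul (by positivity)]
  field_simp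
  rw [sq_sqrt (by positivity)]
end
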